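/- arXiv:1111.4979 — 5 statements merged into one kernel-verified Lean document; each statement's English description precedes it below -/
import Mathlib

section
/- Let a ≥ b ≥ 2 be integers. Then both C(a+b−2, b−1) and C(a, b−1) are odd if and only if there exist integers m ≥ 0 and odd ℓ ≥ 3 with a = 2^m · ℓ and b = 2^m + 1. -/
/-!
By Lucas's theorem modulo 2, `C(n, k)` is odd iff every binary digit of `k` is a digit of `n`,
and `C(x + y, y)` is odd iff `x` and `y` have no binary digit in common. Write `k = b - 1` and
`a = 2^m ℓ` with `ℓ` odd. The digits of `a - 1` are those of `a` with the lowest one, at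
position `m`, traded for all positions below `m`. So the digits of `k` must be digits of `a`
that `a - 1` lacks, which leaves only position `m`: `k = 2^m`, and `ℓ ≥ 3` because `a > 2^m`.
-/

namespace Nat

theorem odd_choose_iff_odd_choose_mod_two_and_odd_choose_div_two (n k : ℕ) :
    Odd (n.choose k) ↔ Odd ((n % 2).choose (k % 2)) ∧ Odd ((n / 2).choose (k / 2)) := by
  have := Choose.choose_modEq_choose_mod_mul_choose_div_nat (n := n) (k := k) (p := 2)
  rw [odd_iff, this, ← odd_iff, odd_mul]

theorem odd_choose_mod_two_iff (n k : ℕ) :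
    Odd ((n % 2).choose (k % 2)) ↔ (k.testBit 0 → n.testBit 0) := by
  simp only [testBit_zero, decide_eq_true_eq]
  rcases mod_two_eq_zero_or_one n with hn | hn <;> rcases mod_two_eq_zero_or_one k with hk | hk <;>
    simp [hn, hk]

theorem odd_choose_iff_testBit_imp (n k : ℕ) :
    Odd (n.choose k) ↔ ∀ i, k.testBit i → n.testBit i := by
  induction k using Nat.strong_induction_on generalizing n with
  | _ k ih =>
    rcases eq_or_ne k 0 with rfl | hk
    · simp
    rw [odd_choose_iff_odd_choose_mod_two_and_odd_choose_div_two, odd_choose_mod_two_iff,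
      ih (k / 2) (by omega)]
    conv_rhs => rw [← and_forall_add_one]
    simp only [testBit_add_one]

theorem odd_add_choose_iff_testBit (m n : ℕ) :
    Odd ((m + n).choose n) ↔ ∀ i, ¬(m.testBit i ∧ n.testBit i) := by
  induction n using Nat.strong_induction_on generalizing m with
  | _ n ih =>
    rcases eq_or_ne n 0 with rfl | hn
    · simp
    rw [odd_choose_iff_odd_choose_mod_two_and_odd_choose_div_two, odd_choose_mod_two_iff]
    conv_rhs => rw [← and_forall_add_one]
    simp only [testBit_add_one, testBit_zero, decide_eq_true_eq]
    by_cases hodd : m % 2 = 1 ∧ n % 2 = 1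
    · have hsum : (m + n) % 2 = 0 := by omega
      simp [hodd, hsum]
    · rw [show (m + n) / 2 = m / 2 + n / 2 by omega, ih (n / 2) (by omega)]
      simp only [hodd, not_false_eq_true, true_and, and_iff_right_iff_imp]
      intro _ _
      omega

theorem odd_choose_pred_add_and_odd_choose_iff_eq_two_pow {m ℓ k : ℕ} (hℓ : Odd ℓ) (hk : k ≠ 0) :
    Odd ((2 ^ m * ℓ - 1 + k).choose k) ∧ Odd ((2 ^ m * ℓ).choose k) ↔ k = 2 ^ m := by
  obtain ⟨t, rfl⟩ := hℓ
  have hpow : 2 ^ m < 2 ^ (m + 1) := Nat.pow_lt_pow_succ (by norm_num)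
  have hsplit : 2 ^ m * (2 * t + 1) = 2 ^ (m + 1) * t + 2 ^ m := by ring
  have hbit : ∀ i, (2 ^ m * (2 * t + 1)).testBit i =
      if i < m + 1 then decide (m = i) else t.testBit (i - (m + 1)) := fun i => by
    rw [hsplit, testBit_two_pow_mul_add _ hpow, testBit_two_pow]
  have hbit_pred : ∀ i, (2 ^ m * (2 * t + 1) - 1).testBit i =
      if i < m + 1 then decide (i < m) else t.testBit (i - (m + 1)) := fun i => by
    have := Nat.two_pow_pos m
    rw [hsplit, Nat.add_sub_assoc this, testBit_two_pow_mul_add _ (by omega),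
      testBit_two_pow_sub_one]
  rw [odd_add_choose_iff_testBit, odd_choose_iff_testBit_imp]
  constructor
  · rintro ⟨hdisj, hsub⟩
    have hsupp : ∀ i, k.testBit i → i = m := by
      intro i hi
      have h1 := hsub i hi
      have h2 := hdisj i
      rw [hbit] at h1
      rw [hbit_pred, hi] at h2
      split_ifs at h1 h2 <;> simp_all
    obtain ⟨i, hi⟩ := exists_testBit_of_ne_zero hk
    obtain rfl := hsupp i hi
    exact le_antisymm (le_of_testBit fun j hj => by rw [hsupp j hj]; exact testBit_two_pow_self)
      (ge_two_pow_of_testBit hi)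
  · rintro rfl
    refine ⟨fun i ⟨_, hi⟩ => ?_, fun i hi => ?_⟩ <;>
      obtain rfl : m = i := by simpa [testBit_two_pow] using hi
    · simp_all
    · simp [hbit]

end Nat

/-- For `a ≥ b ≥ 2`, both `C(a+b-2, b-1)` and `C(a, b-1)` are odd iff
`a = 2^m * ℓ` and `b = 2^m + 1` for some `m ≥ 0` and odd `ℓ ≥ 3`. -/
theorem odd_both_choose_iff (a b : ℕ) (hb : 2 ≤ b) (hab : b ≤ a) :
    (Odd ((a + b - 2).choose (b - 1)) ∧ Odd (a.choose (b - 1))) ↔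
      ∃ m ℓ : ℕ, Odd ℓ ∧ 3 ≤ ℓ ∧ a = 2 ^ m * ℓ ∧ b = 2 ^ m + 1 := by
  have hk : b - 1 ≠ 0 := by omega
  rw [show a + b - 2 = a - 1 + (b - 1) by omega]
  constructor
  · intro h
    obtain ⟨m, ℓ, hℓ, rfl⟩ := Nat.exists_eq_two_pow_mul_odd (n := a) (by omega)
    have hkm : b - 1 = 2 ^ m := (Nat.odd_choose_pred_add_and_odd_choose_iff_eq_two_pow hℓ hk).1 h
    refine ⟨m, ℓ, hℓ, ?_, rfl, by omega⟩
    obtain ⟨t, rfl⟩ := hℓ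
    have : t ≠ 0 := by rintro rfl; omega
    omega
  · rintro ⟨m, ℓ, hℓ, -, rfl, rfl⟩
    exact (Nat.odd_choose_pred_add_and_odd_choose_iff_eq_two_pow hℓ (by positivity)).2 (by simp)
end

section
/- Let n ≥ 2 and a_0 ≥ a_1 ≥ ⋯ ≥ a_n ≥ 1 be integers with a_0 ≥ a_1 + ⋯ + a_n. Then at least one of the two multinomial coefficients (a_0+⋯+a_n)!/(a_0!⋯a_n!) and (a_0+1)!/((a_0+1−(a_1+⋯+a_n))! · a_1! ⋯ a_n!) is even. -/
/-!
By Lucas' theorem, `(a + b).choose a` is odd exactly when `a` and `b` have no binary digit in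
common, so a multinomial coefficient is odd exactly when its entries have pairwise disjoint binary
digits. If both coefficients were odd, the binary digits of `S = a₁ + ⋯ + aₙ` would avoid those of
`a₀` (first coefficient) but lie among those of `a₀ + 1 = (a₀ + 1 - S) + S` (second coefficient).
Only one binary digit of `a₀ + 1` is missing from `a₀`, whereas `S` has at least two digits since
`a₁` and `a₂ + ⋯ + aₙ` are nonzero and digit-disjoint.
-/

namespace Nat

theorem add_eq_or_add_and (a b : ℕ) : a + b = (a ||| b) + (a &&& b) := by
  induction a using Nat.strong_induction_on generalizing b with
  | _ a ih =>
  rcases Nat.eq_zero_or_pos a with rfl | ha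
  · simp
  have hhigh := ih (a / 2) (by omega) (b / 2)
  rw [← Nat.or_div_two, ← Nat.and_div_two] at hhigh
  have hor := Nat.or_mod_two_eq_one (a := a) (b := b)
  have hand := Nat.and_mod_two_eq_one (a := a) (b := b)
  omega

theorem add_eq_or_of_and_eq_zero {a b : ℕ} (h : a &&& b = 0) : a + b = a ||| b := by
  rw [add_eq_or_add_and, h, add_zero]

theorem odd_choose_add_iff_and_eq_zero (a b : ℕ) : Odd ((a + b).choose a) ↔ a &&& b = 0 := by
  induction a using Nat.strong_induction_on generalizing b with
  | _ a ih =>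
  rcases Nat.eq_zero_or_pos a with rfl | ha
  · simp
  have lucas : (a + b).choose a % 2 =
      ((a + b) % 2).choose (a % 2) * ((a + b) / 2).choose (a / 2) % 2 :=
    Choose.choose_modEq_choose_mod_mul_choose_div_nat
  rw [Nat.odd_iff, lucas]
  by_cases hodd : a % 2 = 1 ∧ b % 2 = 1
  · have hlow : (a &&& b) % 2 = 1 := Nat.and_mod_two_eq_one.2 hodd
    rw [show (a + b) % 2 = 0 by omega, hodd.1, Nat.choose_zero_succ, zero_mul]
    omega
  · have hlow : (a &&& b) % 2 ≠ 1 := mt Nat.and_mod_two_eq_one.1 hodd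
    have hchoose : ((a + b) % 2).choose (a % 2) = 1 := by
      rcases Nat.mod_two_eq_zero_or_one a with h | h
      · rw [h, Nat.choose_zero_right]
      · rw [h, show (a + b) % 2 = 1 by omega, Nat.choose_self]
    have hhigh := ih (a / 2) (by omega) (b / 2)
    rw [← Nat.and_div_two, Nat.odd_iff] at hhigh
    rw [hchoose, one_mul, show (a + b) / 2 = a / 2 + b / 2 by omega, hhigh]
    omega

theorem testBit_of_testBit_succ {m j : ℕ} (hm : m.testBit j = false)
    (hm₁ : (m + 1).testBit j = true) {i : ℕ} (hij : i < j) : m.testBit i = true := by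
  induction j generalizing m i with
  | zero => omega
  | succ j ih =>
    rw [Nat.testBit_add_one] at hm hm₁
    have hodd : m % 2 = 1 := by
      by_contra h
      rw [show (m + 1) / 2 = m / 2 by omega, hm] at hm₁
      exact Bool.false_ne_true hm₁
    rcases i with _ | i
    · simpa using hodd
    · rw [Nat.testBit_add_one]
      exact ih hm (show (m + 1) / 2 = m / 2 + 1 by omega ▸ hm₁) (by omega)

theorem eq_of_testBit_of_add_eq_succ {m b s i j : ℕ} (hm : m &&& s = 0) (hb : b &&& s = 0)
    (hbs : b + s = m + 1) (hi : s.testBit i) (hj : s.testBit j) : i = j := by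
  have newBit : ∀ k, s.testBit k → m.testBit k = false ∧ (m + 1).testBit k = true := fun k hk =>
    ⟨by simpa [hk] using congrArg (testBit · k) hm,
      by rw [← hbs, add_eq_or_of_and_eq_zero hb, testBit_or, hk, Bool.or_true]⟩
  obtain ⟨hmi, hmi₁⟩ := newBit i hi
  obtain ⟨hmj, hmj₁⟩ := newBit j hj
  rcases lt_trichotomy i j with h | h | h
  · simp [testBit_of_testBit_succ hmj hmj₁ h] at hmi
  · exact h
  · simp [testBit_of_testBit_succ hmi hmi₁ h] at hmj

theorem exists_ne_testBit_add_of_and_eq_zero {a b : ℕ} (h : a &&& b = 0) (ha : a ≠ 0)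
    (hb : b ≠ 0) : ∃ i j, i ≠ j ∧ (a + b).testBit i ∧ (a + b).testBit j := by
  obtain ⟨i, hi⟩ := exists_testBit_of_ne_zero ha
  obtain ⟨j, hj⟩ := exists_testBit_of_ne_zero hb
  refine ⟨i, j, ?_, ?_, ?_⟩
  · rintro rfl
    simpa [hi, hj] using congrArg (testBit · i) h
  · rw [add_eq_or_of_and_eq_zero h, testBit_or, hi, Bool.true_or]
  · rw [add_eq_or_of_and_eq_zero h, testBit_or, hj, Bool.or_true]

variable {α : Type*} [DecidableEq α]

theorem odd_multinomial_insert_iff {s : Finset α} {x : α} (hx : x ∉ s) (f : α → ℕ) :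
    Odd (multinomial (insert x s) f) ↔ f x &&& ∑ y ∈ s, f y = 0 ∧ Odd (multinomial s f) := by
  rw [multinomial_insert hx, Nat.odd_mul, odd_choose_add_iff_and_eq_zero]

theorem exists_ne_testBit_sum_of_odd_multinomial {s : Finset α} {f : α → ℕ}
    (h : Odd (multinomial s f)) {x y : α} (hx : x ∈ s) (hy : y ∈ s) (hxy : x ≠ y)
    (hfx : f x ≠ 0) (hfy : f y ≠ 0) :
    ∃ i j, i ≠ j ∧ (∑ k ∈ s, f k).testBit i ∧ (∑ k ∈ s, f k).testBit j := by
  rw [← Finset.insert_erase hx, odd_multinomial_insert_iff (Finset.notMem_erase x s)] at h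
  have hrest : f y ≤ ∑ k ∈ s.erase x, f k :=
    Finset.single_le_sum (fun _ _ ↦ Nat.zero_le _) (Finset.mem_erase.2 ⟨hxy.symm, hy⟩)
  rw [← Finset.add_sum_erase s f hx]
  exact exists_ne_testBit_add_of_and_eq_zero h.1 hfx (by omega)

end Nat

theorem one_multinomial_even_general (n : ℕ) (hn : 2 ≤ n) (a : Fin (n + 1) → ℕ)
    (hpos : ∀ i, 1 ≤ a i)
    (hbig : (∑ i ∈ Finset.univ.erase (0 : Fin (n + 1)), a i) ≤ a 0) :
    Even (Nat.multinomial Finset.univ a) ∨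
      Even (Nat.multinomial Finset.univ
        (Function.update a 0 (a 0 + 1 - ∑ i ∈ Finset.univ.erase (0 : Fin (n + 1)), a i))) := by
  set t := Finset.univ.erase (0 : Fin (n + 1))
  have h0t : 0 ∉ t := Finset.notMem_erase _ _
  by_contra! ⟨h₁, h₂⟩
  rw [Nat.not_even_iff_odd, ← Finset.insert_erase (Finset.mem_univ 0),
    Nat.odd_multinomial_insert_iff h0t] at h₁ h₂
  rw [Function.update_self, Finset.sum_update_of_notMem h0t] at h₂
  obtain ⟨x, hx, y, hy, hxy⟩ := Finset.one_lt_card.1 (show 1 < t.card by simp [t]; omega)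
  obtain ⟨i, j, hij, hi, hj⟩ := Nat.exists_ne_testBit_sum_of_odd_multinomial h₁.2 hx hy hxy
    (by have := hpos x; omega) (by have := hpos y; omega)
  exact hij (Nat.eq_of_testBit_of_add_eq_succ h₁.1 h₂.1 (by omega) hi hj)

/-- Let `n ≥ 2` and `a_0 ≥ ⋯ ≥ a_n ≥ 1` with `a_0 ≥ a_1 + ⋯ + a_n`.
Then at least one of the multinomial coefficients `(a_0+⋯+a_n)!/(a_0!⋯a_n!)` and
`(a_0+1)!/((a_0+1-(a_1+⋯+a_n))! · a_1! ⋯ a_n!)` is even. -/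
theorem one_multinomial_even (n : ℕ) (hn : 2 ≤ n) (a : Fin (n + 1) → ℕ)
    (hmono : ∀ i j : Fin (n + 1), i ≤ j → a j ≤ a i) (hpos : ∀ i, 1 ≤ a i)
    (hbig : (∑ i ∈ Finset.univ.erase (0 : Fin (n + 1)), a i) ≤ a 0) :
    Even (Nat.multinomial Finset.univ a) ∨
      Even (Nat.multinomial Finset.univ
        (Function.update a 0 (a 0 + 1 - ∑ i ∈ Finset.univ.erase (0 : Fin (n + 1)), a i))) :=
  one_multinomial_even_general n hn a hpos hbig
end

section
/- Let j ≥ 0 and k ≥ 1 be integers, and work in the polynomial ring S = K[x,y,z] over a field K. Define f_{k+j} = ∑_{i=0}^{k+j−1} y^i (−z)^{k+j−1−i} and g_k = −∑_{i=0}^{k−1} C(k,i) x^i (y+z)^{k−1−i}. Then −f_{k+j}·x^k + g_k·y^{k+j} + (−1)^{k+j+1} g_k·z^{k+j} + f_{k+j}·(x+y+z)^k = 0 in S. -/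
/-!
With `f` the geometric sum and `g` the truncated binomial expansion, `f * (y + z) = y^n - (-z)^n`
and `(x + y + z)^k - x^k = -(y + z) * g`; multiplying the first by `g`, the second by `f` and
subtracting gives the syzygy, which is therefore an identity in any commutative ring.
-/

open MvPolynomial

section SyzygyIdentity

variable {R : Type*} [CommRing R]

theorem add_pow_sub_pow_eq_mul_sum (a b : R) (k : ℕ) :
    (a + b) ^ k - a ^ k = b * ∑ i ∈ Finset.range k, (k.choose i : R) * a ^ i * b ^ (k - 1 - i) := by
  have hterm : ∀ i ∈ Finset.range k,
      a ^ i * b ^ (k - i) * (k.choose i : R) = b * ((k.choose i : R) * a ^ i * b ^ (k - 1 - i)) := by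
    intro i hi
    rw [show k - i = k - 1 - i + 1 by grind, pow_succ]
    ring
  rw [add_pow, Finset.sum_range_succ, Finset.sum_congr rfl hterm, ← Finset.mul_sum]
  simp

theorem four_term_syzygy (x y z : R) (n k : ℕ) :
    let f := ∑ i ∈ Finset.range n, y ^ i * (-z) ^ (n - 1 - i)
    let g := -(∑ i ∈ Finset.range k, (k.choose i : R) * x ^ i * (y + z) ^ (k - 1 - i))
    (-f) * x ^ k + g * y ^ n + (-1) ^ (n + 1) * g * z ^ n + f * (x + y + z) ^ k = 0 := by
  intro f g
  have hf : f * (y - -z) = y ^ n - (-z) ^ n := geom_sum₂_mul y (-z) n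
  have hg : (x + (y + z)) ^ k - x ^ k = (y + z) * -g := by
    rw [neg_neg]
    exact add_pow_sub_pow_eq_mul_sum x (y + z) k
  have hsign : (-1 : R) ^ (n + 1) * z ^ n = -(-z) ^ n := by
    rw [neg_pow z, pow_succ]
    ring
  linear_combination (-g) * hf + f * hg + g * hsign

end SyzygyIdentity

theorem syzygy_identity_general (K : Type*) [Field K] (j k : ℕ) :
    let x : MvPolynomial (Fin 3) K := X 0
    let y : MvPolynomial (Fin 3) K := X 1
    let z : MvPolynomial (Fin 3) K := X 2
    let f : MvPolynomial (Fin 3) K :=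
      ∑ i ∈ Finset.range (k + j), y ^ i * (-z) ^ (k + j - 1 - i)
    let g : MvPolynomial (Fin 3) K :=
      -(∑ i ∈ Finset.range k, (k.choose i : MvPolynomial (Fin 3) K) * x ^ i * (y + z) ^ (k - 1 - i))
    (-f) * x ^ k + g * y ^ (k + j) + (-1) ^ (k + j + 1) * g * z ^ (k + j)
      + f * (x + y + z) ^ k = 0 :=
  four_term_syzygy _ _ _ (k + j) k

/-- In `S = K[x,y,z]`, with `f_{k+j} = ∑_{i<k+j} y^i (-z)^{k+j-1-i}` and
`g_k = -∑_{i<k} C(k,i) x^i (y+z)^{k-1-i}`, the tuple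
`(-f_{k+j}, g_k, (-1)^{k+j+1} g_k, f_{k+j})` is a syzygy on
`(x^k, y^{k+j}, z^{k+j}, (x+y+z)^k)`. -/
theorem syzygy_identity (K : Type*) [Field K] (j k : ℕ) (hk : 1 ≤ k) :
    let x : MvPolynomial (Fin 3) K := X 0
    let y : MvPolynomial (Fin 3) K := X 1
    let z : MvPolynomial (Fin 3) K := X 2
    let f : MvPolynomial (Fin 3) K :=
      ∑ i ∈ Finset.range (k + j), y ^ i * (-z) ^ (k + j - 1 - i)
    let g : MvPolynomial (Fin 3) K :=
      -(∑ i ∈ Finset.range k, (k.choose i : MvPolynomial (Fin 3) K) * x ^ i * (y + z) ^ (k - 1 - i))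
    (-f) * x ^ k + g * y ^ (k + j) + (-1) ^ (k + j + 1) * g * z ^ (k + j)
      + f * (x + y + z) ^ k = 0 :=
  syzygy_identity_general K j k
end

section
/- Let K be a field of characteristic 2 and d = 2^m + 1 for some m ≥ 1. In S = K[x,y,z], the tuple α = (yz, xz, xy, xyz(x+y+z)^2) is a syzygy on (x^d, y^d, z^d, (x+y+z)^{d−3}), i.e., yz·x^d + xz·y^d + xy·z^d + xyz(x+y+z)^2·(x+y+z)^{d−3} = 0. -/
open MvPolynomial

/-- Over a field `K` of characteristic 2, with `d = 2^m + 1` (`m ≥ 1`),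
in `S = K[x,y,z]` the tuple `(yz, xz, xy, xyz(x+y+z)^2)` is a syzygy on
`(x^d, y^d, z^d, (x+y+z)^{d-3})`. -/
theorem char_two_syzygy (K : Type*) [Field K] [CharP K 2] (m d : ℕ) (hm : 1 ≤ m)
    (hd : d = 2 ^ m + 1) :
    let x : MvPolynomial (Fin 3) K := X 0
    let y : MvPolynomial (Fin 3) K := X 1
    let z : MvPolynomial (Fin 3) K := X 2
    y * z * x ^ d + x * z * y ^ d + x * y * z ^ d
      + x * y * z * (x + y + z) ^ 2 * (x + y + z) ^ (d - 3) = 0 := by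
  intro x y z
  have h2 : (2:ℕ) ≤ 2 ^ m := by
    calc (2:ℕ) = 2 ^ 1 := rfl
    _ ≤ 2 ^ m := Nat.pow_le_pow_right (by norm_num) hm
  have hsum : 2 + (d - 3) = 2 ^ m := by omega
  have hd1 : d = 2 ^ m + 1 := hd
  have hpow : (x + y + z) ^ 2 * (x + y + z) ^ (d - 3) = (x + y + z) ^ (2 ^ m) := by
    rw [← pow_add, hsum]
  have hfrob : (x + y + z) ^ (2 ^ m) = x ^ 2 ^ m + y ^ 2 ^ m + z ^ 2 ^ m := by
    rw [add_pow_char_pow, add_pow_char_pow]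
  rw [mul_assoc (x*y*z), hpow, hfrob, hd1]
  haveI : CharP (MvPolynomial (Fin 3) K) 2 := inferInstance
  ring_nf
  have h0 : (2 : MvPolynomial (Fin 3) K) = 0 := CharTwo.two_eq_zero
  simp [h0]
end

section
/- Let K be a field of characteristic 3, m ≥ 1, and d = 3j − 1 where j = (3^m + 1)/2 (so 2d = 3^{m+1} + 1), and assume j ≥ 3. Then in S = K[x,y,z], the identity x^{j−1}y^j(x+y+z)^{j−3}·x^d + (x−z)^{3^m}(x+y+z)^{j−3}·y^d − y^j z^{j−1}(x+y+z)^{j−3}·z^d − (x−z)^{3^m}y^j·(x+y+z)^{d−3} = 0 holds. -/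
open MvPolynomial

/-- Over a field `K` of characteristic 3, with `m ≥ 1`,
`j = (3^m + 1)/2 ≥ 3` and `d = 3j - 1`, the stated syzygy identity holds in
`S = K[x,y,z]`. -/
theorem char_three_syzygy (K : Type*) [Field K] [CharP K 3] (m j d : ℕ) (hm : 1 ≤ m)
    (hj : 2 * j = 3 ^ m + 1) (hj3 : 3 ≤ j) (hd : d = 3 * j - 1) :
    let x : MvPolynomial (Fin 3) K := X 0
    let y : MvPolynomial (Fin 3) K := X 1
    let z : MvPolynomial (Fin 3) K := X 2
    x ^ (j - 1) * y ^ j * (x + y + z) ^ (j - 3) * x ^ d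
      + (x - z) ^ (3 ^ m) * (x + y + z) ^ (j - 3) * y ^ d
      - y ^ j * z ^ (j - 1) * (x + y + z) ^ (j - 3) * z ^ d
      - (x - z) ^ (3 ^ m) * y ^ j * (x + y + z) ^ (d - 3) = 0 := by
  intro x y z
  haveI : Fact (Nat.Prime 3) := ⟨by norm_num⟩
  have h1 : (x + y + z) ^ (3 ^ m) = x ^ 3 ^ m + y ^ 3 ^ m + z ^ 3 ^ m := by
    rw [add_pow_char_pow, add_pow_char_pow]
  have h2 : (x - z) ^ 3 ^ m = x ^ 3 ^ m - z ^ 3 ^ m := sub_pow_char_pow x z m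
  obtain ⟨f, rfl⟩ : ∃ f, j = f + 3 := ⟨j - 3, by omega⟩
  have hm3 : 1 ≤ 3 ^ m := Nat.one_le_pow _ _ (by norm_num)
  have hdd : (x + y + z) ^ (d - 3) = (x + y + z) ^ f * (x + y + z) ^ 3 ^ m := by
    rw [← pow_add]; congr 1; omega
  have ht : 3 ^ m = 2 * f + 5 := by omega
  have e1 : f + 3 - 1 = f + 2 := by omega
  have e2 : f + 3 - 3 = f := by omega
  have e3 : d = 3 * f + 8 := by omega
  rw [hdd, h1, h2, ht, e1, e2, e3]
  ring
end
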